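/- arXiv:2206.14703 — 6 statements merged into one kernel-verified Lean document; each statement's English description precedes it below -/
import Mathlib

section
/- Every Fσ measure-zero subset C of Cantor space is contained in a set of the form H_{b,φ} = {x ∈ 2^ℕ : for all but finitely many n, x↾[b(n),b(n+1)) ∈ φ(n)}, where b ∈ ℕ^ℕ is strictly increasing with b(0)=0 and φ(n) ⊆ 2^{[b(n),b(n+1))} satisfies |φ(n)|/2^{b(n+1)-b(n)} ≤ 2^{-n} for all n. -/
open Filter MeasureTheory
open scoped ENNReal

/-!
If `E` is closed, the cylinders over the length-`N` prefixes of points of `E` decrease to `E`,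
so for a null closed `E` the number of such prefixes is `o(2 ^ N)`. Apply this to the increasing
closed null sets `E n = D 0 ∪ ⋯ ∪ D n`, choosing `b (n + 1)` so large that `E n` has at most
`2 ^ (b (n + 1) - b n - n)` prefixes of length `b (n + 1)`, and let `φ n` consist of their
restrictions to `[b n, b (n + 1))`. A point of `D k` lies in `E n` for every `n ≥ k`.
-/

def IsCoinFlipping (μ : Measure (ℕ → Bool)) : Prop :=
  ∀ (I : Finset ℕ) (S : Finset (↥I → Bool)),
    μ {x : ℕ → Bool | (fun i : ↥I => x i.1) ∈ S} = (S.card : ℝ≥0∞) / 2 ^ I.card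

noncomputable def prefixes (E : Set (ℕ → Bool)) (N : ℕ) : Finset (Finset.range N → Bool) :=
  (Set.toFinite ((Finset.range N).restrict '' E)).toFinset

def prefixCylinder (E : Set (ℕ → Bool)) (N : ℕ) : Set (ℕ → Bool) :=
  (Finset.range N).restrict ⁻¹' ((Finset.range N).restrict '' E)

section prefixes

variable {E : Set (ℕ → Bool)} {N : ℕ}

lemma mem_prefixes {f : Finset.range N → Bool} :
    f ∈ prefixes E N ↔ f ∈ (Finset.range N).restrict '' E :=
  Set.Finite.mem_toFinset _

lemma measure_prefixCylinder {μ : Measure (ℕ → Bool)} (hμ : IsCoinFlipping μ)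
    (E : Set (ℕ → Bool)) (N : ℕ) :
    μ (prefixCylinder E N) = (prefixes E N).card / 2 ^ N := by
  have h := hμ (Finset.range N) (prefixes E N)
  rw [Finset.card_range] at h
  rw [← h]
  congr 1
  ext x
  exact mem_prefixes.symm

lemma measurableSet_prefixCylinder (E : Set (ℕ → Bool)) (N : ℕ) :
    MeasurableSet (prefixCylinder E N) :=
  Finset.measurable_restrict _ (Set.toFinite _).measurableSet

lemma antitone_prefixCylinder (E : Set (ℕ → Bool)) : Antitone (prefixCylinder E) := by
  rintro N M hNM x ⟨y, hyE, hyx⟩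
  exact ⟨y, hyE, funext fun i => congrFun hyx ⟨i, Finset.range_subset_range.2 hNM i.2⟩⟩

lemma IsClosed.iInter_prefixCylinder_subset (hE : IsClosed E) :
    ⋂ N, prefixCylinder E N ⊆ E := by
  intro x hx
  have hy : ∀ N, ∃ y ∈ E, ∀ i < N, y i = x i := fun N => by
    obtain ⟨y, hyE, hyx⟩ := Set.mem_iInter.1 hx N
    exact ⟨y, hyE, fun i hi => congrFun hyx ⟨i, Finset.mem_range.2 hi⟩⟩
  choose y hyE hyx using hy
  have hyx : Tendsto y atTop (nhds x) := tendsto_pi_nhds.2 fun i =>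
    tendsto_atTop_of_eventually_const fun N hN => hyx N i hN
  exact hE.mem_of_tendsto hyx (Eventually.of_forall hyE)

end prefixes

lemma tendsto_card_prefixes_div_two_pow {μ : Measure (ℕ → Bool)} (hμ : IsCoinFlipping μ)
    {E : Set (ℕ → Bool)} (hE : IsClosed E) (hE0 : μ E = 0) :
    Tendsto (fun N => ((prefixes E N).card : ℝ≥0∞) / 2 ^ N) atTop (nhds 0) := by
  have hfin : μ (prefixCylinder E 0) ≠ ∞ := by simp [measure_prefixCylinder hμ]
  have hlim := tendsto_measure_iInter_atTop
    (fun N => (measurableSet_prefixCylinder E N).nullMeasurableSet) (antitone_prefixCylinder E)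
    ⟨0, hfin⟩
  rw [measure_mono_null hE.iInter_prefixCylinder_subset hE0] at hlim
  simpa only [Function.comp_def, measure_prefixCylinder hμ] using hlim

lemma exists_lt_mul_two_pow_le {a : ℕ → ℕ}
    (ha : Tendsto (fun N => (a N : ℝ≥0∞) / 2 ^ N) atTop (nhds 0)) (k m : ℕ) :
    ∃ N, m < N ∧ a N * 2 ^ k ≤ 2 ^ (N - m) := by
  have ha' : Tendsto (fun N => 2 ^ (m + k) * ((a N : ℝ≥0∞) / 2 ^ N)) atTop (nhds 0) := by
    simpa using ENNReal.Tendsto.const_mul ha (Or.inr (by simp))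
  obtain ⟨N, hN, hmN⟩ :=
    ((ha'.eventually_lt_const zero_lt_one).and (eventually_gt_atTop (m + k))).exists
  have h : a N * 2 ^ (m + k) < 2 ^ N := by
    rw [← mul_div_assoc, ENNReal.div_lt_iff (by simp) (by simp), one_mul, mul_comm] at hN
    exact_mod_cast hN
  refine ⟨N, by omega, Nat.le_of_mul_le_mul_right (c := 2 ^ m) ?_ (by positivity)⟩
  calc a N * 2 ^ k * 2 ^ m = a N * 2 ^ (m + k) := by ring
    _ ≤ 2 ^ N := h.le
    _ = 2 ^ (N - m) * 2 ^ m := by rw [← pow_add, Nat.sub_add_cancel (by omega)]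

lemma exists_blocks_mul_two_pow_le {a : ℕ → ℕ → ℕ}
    (ha : ∀ n, Tendsto (fun N => (a n N : ℝ≥0∞) / 2 ^ N) atTop (nhds 0)) :
    ∃ b : ℕ → ℕ, StrictMono b ∧ b 0 = 0 ∧
      ∀ n, a n (b (n + 1)) * 2 ^ n ≤ 2 ^ (b (n + 1) - b n) := by
  choose next hnext_gt hnext_le using fun n m => exists_lt_mul_two_pow_le (ha n) n m
  let b : ℕ → ℕ := fun n => Nat.rec 0 (fun k bk => next k bk) n
  exact ⟨b, strictMono_nat_of_lt_succ fun n => hnext_gt n (b n), rfl,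
    fun n => hnext_le n (b n)⟩

/-- Every Fσ measure-zero subset `C` of Cantor space (a countable union of closed null
sets w.r.t. the coin-flipping measure `μ`) is contained in a set of the form
`H_{b,φ} = {x : x↾[b n, b (n+1)) ∈ φ n for all but finitely many n}`, where `b` is
strictly increasing with `b 0 = 0` and `|φ n| * 2^n ≤ 2^(b (n+1) - b n)` for all `n`. -/
theorem stmt4 (μ : Measure (ℕ → Bool))
    (hμ : ∀ (I : Finset ℕ) (S : Finset (↥I → Bool)),
      μ {x : ℕ → Bool | (fun i : ↥I => x i.1) ∈ S} = (S.card : ℝ≥0∞) / 2 ^ I.card)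
    (C : Set (ℕ → Bool))
    (hC : ∃ D : ℕ → Set (ℕ → Bool),
      (∀ n, IsClosed (D n) ∧ μ (D n) = 0) ∧ C = ⋃ n, D n) :
    ∃ b : ℕ → ℕ, StrictMono b ∧ b 0 = 0 ∧
      ∃ φ : (n : ℕ) → Finset (↥(Finset.Ico (b n) (b (n + 1))) → Bool),
        (∀ n, (φ n).card * 2 ^ n ≤ 2 ^ (b (n + 1) - b n)) ∧
        C ⊆ {x : ℕ → Bool | ∀ᶠ n in Filter.atTop,
          (fun i : ↥(Finset.Ico (b n) (b (n + 1))) => x i.1) ∈ φ n} := by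
  obtain ⟨D, hD, rfl⟩ := hC
  have hE : ∀ n, IsClosed (Set.accumulate D n) := fun n =>
    (Set.finite_le_nat n).isClosed_biUnion fun k _ => (hD k).1
  have hE0 : ∀ n, μ (Set.accumulate D n) = 0 := fun n =>
    measure_mono_null (Set.accumulate_subset_iUnion n) (measure_iUnion_null fun k => (hD k).2)
  obtain ⟨b, hb, hb0, hbcard⟩ := exists_blocks_mul_two_pow_le fun n =>
    tendsto_card_prefixes_div_two_pow hμ (hE n) (hE0 n)
  have hblock : ∀ n, Finset.Ico (b n) (b (n + 1)) ⊆ Finset.range (b (n + 1)) :=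
    fun n i hi => Finset.mem_range.2 (Finset.mem_Ico.1 hi).2
  refine ⟨b, hb, hb0, fun n => (prefixes (Set.accumulate D n) (b (n + 1))).image
    (Finset.restrict₂ (π := fun _ => Bool) (hblock n)),
    fun n => (Nat.mul_le_mul_right _ Finset.card_image_le).trans (hbcard n), ?_⟩
  intro x hx
  obtain ⟨k, hk⟩ := Set.mem_iUnion.1 hx
  filter_upwards [eventually_ge_atTop k] with n hn
  exact Finset.mem_image_of_mem _
    (mem_prefixes.2 ⟨x, Set.mem_accumulate.2 ⟨k, hn, hk⟩, rfl⟩)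
end

section
/- Let f, g ∈ ℕ^ℕ be strictly increasing functions, and let I be the interval partition of ℕ with blocks I_n = [f(n), f(n+1)). Define g* : ℕ → ℕ by g*(0)=0 and g*(n+1)=g(g*(n)+1), with interval partition I^g having blocks I^g_n = [g*(n), g*(n+1)). If f(n) ≤ g(n) for all but finitely many n, then for all but finitely many n there exists m with I_m ⊆ I^g_n. -/
open Filter

/-- If `f, g` are strictly increasing, `I_n = [f n, f (n+1))`, `g*` is defined by
`g* 0 = 0`, `g* (n+1) = g (g* n + 1)`, `I^g_n = [g* n, g* (n+1))`, and `f ≤* g`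
(i.e. `f n ≤ g n` for all but finitely many `n`), then for all but finitely many `n`
there is `m` with `I_m ⊆ I^g_n`. -/
theorem stmt5 (f g gs : ℕ → ℕ) (hf : StrictMono f) (hf0 : f 0 = 0) (hg : StrictMono g)
    (hgs0 : gs 0 = 0) (hgs : ∀ n, gs (n + 1) = g (gs n + 1))
    (hfg : ∀ᶠ n in Filter.atTop, f n ≤ g n) :
    ∀ᶠ n in Filter.atTop, ∃ m,
      Set.Ico (f m) (f (m + 1)) ⊆ Set.Ico (gs n) (gs (n + 1)) := by
  obtain ⟨N, hN⟩ := eventually_atTop.mp hfg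
  have hgsmono : StrictMono gs := strictMono_nat_of_lt_succ fun n => by
    rw [hgs]; exact lt_of_lt_of_le (Nat.lt_succ_self _) (hg.le_apply)
  filter_upwards [eventually_ge_atTop N] with n hn
  set k := gs n with hk
  have hkn : N ≤ k + 1 := le_trans hn (le_trans hgsmono.le_apply (Nat.le_succ _))
  have hex : ∃ m, k ≤ f m := ⟨k, hf.le_apply⟩
  refine ⟨Nat.find hex, ?_⟩
  intro x hx
  obtain ⟨h1, h2⟩ := hx
  have hmk : Nat.find hex ≤ k := Nat.find_le hf.le_apply
  refine ⟨le_trans (Nat.find_spec hex) h1, ?_⟩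
  calc x < f (Nat.find hex + 1) := h2
    _ ≤ f (k + 1) := hf.monotone (by omega)
    _ ≤ g (k + 1) := hN _ hkn
    _ = gs (n + 1) := (hgs n).symm
end

section
/- Let f, g ∈ ℕ^ℕ be strictly increasing, I the interval partition with blocks I_n = [f(n), f(n+1)), and g*, I^g as follows: g*(0)=0, g*(n+1)=g(g*(n)+1), I^g_n=[g*(n), g*(n+1)). If it is not the case that g ≤* f (i.e., g(n) > f(n) for infinitely many n), then there exist infinitely many n such that for some m ≥ n, I_m ⊆ I^g_n. -/
open Filter

/-- If `f, g` are strictly increasing, `f 0 = 0`, `f n ≥ n`, `I_n = [f n, f (n+1))`,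
`g*` is defined by `g* 0 = 0`, `g* (n+1) = g (g* n + 1)`, `I^g_n = [g* n, g* (n+1))`,
and `¬ (g ≤* f)` (i.e. `g n > f n` for infinitely many `n`), then for infinitely many
`n` there is `m ≥ n` with `I_m ⊆ I^g_n`. -/
theorem stmt6 (f g gs : ℕ → ℕ) (hf : StrictMono f) (hf0 : f 0 = 0)
    (hfn : ∀ n, n ≤ f n) (hg : StrictMono g)
    (hgs0 : gs 0 = 0) (hgs : ∀ n, gs (n + 1) = g (gs n + 1))
    (hfg : ∃ᶠ n in Filter.atTop, f n < g n) :
    ∃ᶠ n in Filter.atTop, ∃ m, n ≤ m ∧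
      Set.Ico (f m) (f (m + 1)) ⊆ Set.Ico (gs n) (gs (n + 1)) := by
  have hgge : ∀ j, j ≤ g j := fun j => hg.le_apply
  have hgs_lt : ∀ n, gs n < gs (n + 1) := by
    intro n
    have h1 : gs n + 1 ≤ g (gs n + 1) := hgge _
    rw [hgs]
    omega
  have hgs_mono : Monotone gs := monotone_nat_of_le_succ fun n => (hgs_lt n).le
  have hgs_ge : ∀ n, n ≤ gs n := by
    intro n
    induction n with
    | zero => omega
    | succ n ih => have := hgs_lt n; omega
  rw [Filter.frequently_atTop]
  intro N
  by_contra hcon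
  push_neg at hcon
  -- key consequence of the failure of the conclusion
  have hstar : ∀ n m, N ≤ n → n ≤ m → gs n ≤ f m → gs (n + 1) < f (m + 1) := by
    intro n m hNn hnm hfm
    by_contra h
    push_neg at h
    exact hcon n hNn m hnm (Set.Ico_subset_Ico hfm h)
  -- pick k with f k < g k and k > gs N
  obtain ⟨k, hkge, hfk⟩ := Filter.frequently_atTop.mp hfg (gs N + 1)
  -- find n with gs n < k ≤ gs (n+1)
  have hex : ∃ n, k ≤ gs n := ⟨k, hgs_ge k⟩
  have hspec : k ≤ gs (Nat.find hex) := Nat.find_spec hex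
  have hn1pos : Nat.find hex ≠ 0 := by
    intro h0
    rw [h0, hgs0] at hspec
    omega
  obtain ⟨n, hn⟩ : ∃ n, Nat.find hex = n + 1 := ⟨Nat.find hex - 1, by omega⟩
  rw [hn] at hspec
  have hlt : gs n < k := by
    by_contra h
    push_neg at h
    exact Nat.find_min hex (by omega) h
  have hNn : N ≤ n := by
    by_contra h
    push_neg at h
    have : gs (n + 1) ≤ gs N := hgs_mono (by omega)
    omega
  -- first application: m = gs n
  have h1 : gs (n + 1) < f (gs n + 1) :=
    hstar n (gs n) hNn (hgs_ge n) (hfn (gs n))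
  rcases eq_or_lt_of_le (show gs n + 1 ≤ k by omega) with heq | hltk
  · -- k = gs n + 1 : then g k = gs (n+1) < f k
    have hgk : g k = gs (n + 1) := by rw [← heq, hgs]
    rw [heq] at h1
    omega
  · -- gs n + 1 < k : second application with m = gs n + 1, level n + 1
    have h2 : gs (n + 2) < f (gs n + 2) :=
      hstar (n + 1) (gs n + 1) (by omega) (by have := hgs_ge n; omega) (by omega)
    have hfk2 : f (gs n + 2) ≤ f k := hf.monotone (by omega)
    have hgk : g k < gs (n + 2) := by
      have h3 : g k < g (gs (n + 1) + 1) := hg (by omega)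
      rw [hgs (n + 1)]
      exact h3
    omega
end

section
/- Let b₀, b₁ ∈ ℕ^ℕ be strictly increasing with b₀(0)=0, and suppose b₀ ≤* b₁. Let φ be a sequence with φ(n) ⊆ 2^{[b₀(n),b₀(n+1))} and |φ(n)|/2^{b₀(n+1)-b₀(n)} ≤ 2^{-n} for all n. Then, with b₁* defined by b₁*(0)=0, b₁*(n+1)=b₁(b₁*(n)+1), there exists a sequence φ* with φ*(n) ⊆ 2^{[b₁*(n),b₁*(n+1))} satisfying |φ*(n)|/2^{b₁*(n+1)-b₁*(n)} ≤ 2^{-n} for all but finitely many n, such that H_{b₀,φ} ⊆ H_{b₁*,φ*}. -/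
/-!
Each block `[bs n, bs (n+1))` of `bs` eventually contains a whole block `[b₀ m, b₀ (m+1))` of
`b₀` with `m ≥ n`: taking `m` least with `bs n ≤ b₀ m` gives `m ≤ bs n`, and then
`b₀ (m+1) ≤ b₀ (bs n + 1) ≤ b₁ (bs n + 1) = bs (n+1)` once `b₀ ≤ b₁` holds from `n` on;
the same bound one step earlier gives `b₀ n ≤ bs n ≤ b₀ m`, so `n ≤ m`.
Let `ψ n` be the set of patterns on the `bs`-block whose restriction to that `b₀`-block lies in
`φ m`: its relative size is that of `φ m`, at most `2^-m ≤ 2^-n`, and since `m → ∞`, a sequence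
that eventually follows `φ` eventually follows `ψ`.
-/

open Filter

section Cylinder

variable {ι β : Type*} [DecidableEq ι] [Fintype β] [DecidableEq β] {s t : Finset ι}

def cylinder (hst : s ⊆ t) (A : Finset (s → β)) : Finset (t → β) :=
  {f | Finset.restrict₂ (π := fun _ => β) hst f ∈ A}

@[simp]
theorem mem_cylinder {hst : s ⊆ t} {A : Finset (s → β)} {f : t → β} :
    f ∈ cylinder hst A ↔ Finset.restrict₂ (π := fun _ => β) hst f ∈ A := by
  simp [cylinder]

theorem card_cylinder_le (hst : s ⊆ t) (A : Finset (s → β)) :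
    (cylinder hst A).card ≤ A.card * Fintype.card β ^ (t.card - s.card) := by
  let split : (t → β) → (s → β) × ((t \ s : Finset ι) → β) := fun f =>
    (Finset.restrict₂ (π := fun _ => β) hst f,
      Finset.restrict₂ (π := fun _ => β) Finset.sdiff_subset f)
  have hsplit : Set.InjOn split (cylinder hst A) := by
    intro f _ g _ hfg
    obtain ⟨hs, hts⟩ := Prod.ext_iff.mp hfg
    funext i
    by_cases hi : i.1 ∈ s
    · exact congrFun hs ⟨i.1, hi⟩
    · exact congrFun hts ⟨i.1, Finset.mem_sdiff.mpr ⟨i.2, hi⟩⟩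
  calc (cylinder hst A).card
      ≤ (A ×ˢ (Finset.univ : Finset ((t \ s : Finset ι) → β))).card :=
        Finset.card_le_card_of_injOn split
          (fun f hf => Finset.mem_product.mpr ⟨(mem_cylinder (f := f)).mp hf, Finset.mem_univ _⟩)
          hsplit
    _ = A.card * Fintype.card β ^ (t.card - s.card) := by
        simp [Finset.card_sdiff_of_subset hst]

theorem card_cylinder_mul_le (hst : s ⊆ t) {A : Finset (s → β)} {c : ℕ}
    (hA : A.card * c ≤ Fintype.card β ^ s.card) :
    (cylinder hst A).card * c ≤ Fintype.card β ^ t.card :=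
  calc (cylinder hst A).card * c
      ≤ A.card * Fintype.card β ^ (t.card - s.card) * c :=
        Nat.mul_le_mul_right c (card_cylinder_le hst A)
    _ = A.card * c * Fintype.card β ^ (t.card - s.card) := by ring
    _ ≤ Fintype.card β ^ s.card * Fintype.card β ^ (t.card - s.card) := Nat.mul_le_mul_right _ hA
    _ = Fintype.card β ^ t.card := by
        rw [← pow_add, Nat.add_sub_cancel' (Finset.card_le_card hst)]

end Cylinder

section Blocks

variable {b₀ b₁ bs : ℕ → ℕ}

theorem strictMono_of_succ_eq (hb₁ : StrictMono b₁) (hbs : ∀ n, bs (n + 1) = b₁ (bs n + 1)) :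
    StrictMono bs :=
  strictMono_nat_of_lt_succ fun n => by
    rw [hbs]
    exact (Nat.lt_succ_self _).trans_le hb₁.le_apply

theorem exists_forall_ge_apply_succ_le (hb₁ : StrictMono b₁)
    (hle : ∀ᶠ n in atTop, b₀ n ≤ b₁ n) (hbs : ∀ n, bs (n + 1) = b₁ (bs n + 1)) :
    ∃ N, ∀ n ≥ N, b₀ (bs n + 1) ≤ bs (n + 1) := by
  obtain ⟨N, hN⟩ := eventually_atTop.mp hle
  refine ⟨N, fun n hn => ?_⟩
  have hn_le : n ≤ bs n := (strictMono_of_succ_eq hb₁ hbs).le_apply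
  rw [hbs]
  exact hN _ (by omega)

theorem exists_eventually_le_and_Ico_subset (hb₀ : StrictMono b₀) (hb₁ : StrictMono b₁)
    (hle : ∀ᶠ n in atTop, b₀ n ≤ b₁ n) (hbs : ∀ n, bs (n + 1) = b₁ (bs n + 1)) :
    ∃ m : ℕ → ℕ, ∀ᶠ n in atTop,
      n ≤ m n ∧ Finset.Ico (b₀ (m n)) (b₀ (m n + 1)) ⊆ Finset.Ico (bs n) (bs (n + 1)) := by
  have hex : ∀ n, ∃ k, bs n ≤ b₀ k := fun n => ⟨bs n, hb₀.le_apply⟩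
  obtain ⟨N, hN⟩ := exists_forall_ge_apply_succ_le hb₁ hle hbs
  have hbs_le : ∀ n, n ≤ bs n := fun _ => (strictMono_of_succ_eq hb₁ hbs).le_apply
  set m := fun n => Nat.find (hex n)
  have hm_ge : ∀ n, bs n ≤ b₀ (m n) := fun n => Nat.find_spec (hex n)
  have hm_le : ∀ n, m n ≤ bs n := fun _ => Nat.find_le hb₀.le_apply
  refine ⟨m, eventually_atTop.mpr ⟨N + 1, fun n hn => ⟨?_, ?_⟩⟩⟩
  · obtain ⟨k, rfl⟩ : ∃ k, n = k + 1 := ⟨n - 1, by omega⟩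
    have hk : b₀ (k + 1) ≤ b₀ (bs k + 1) := hb₀.monotone (by have := hbs_le k; omega)
    exact hb₀.le_iff_le.mp ((hk.trans (hN k (by omega))).trans (hm_ge (k + 1)))
  · have hup : b₀ (m n + 1) ≤ b₀ (bs n + 1) := hb₀.monotone (Nat.succ_le_succ (hm_le n))
    have hlow := hm_ge n
    have hN' := hN n (by omega)
    intro i hi
    simp only [Finset.mem_Ico] at hi ⊢
    omega

end Blocks

theorem stmt7_general (b₀ b₁ bs : ℕ → ℕ) (hb₀ : StrictMono b₀)
    (hb₁ : StrictMono b₁) (hle : ∀ᶠ n in Filter.atTop, b₀ n ≤ b₁ n)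
    (hbs : ∀ n, bs (n + 1) = b₁ (bs n + 1))
    (φ : (n : ℕ) → Finset (↥(Finset.Ico (b₀ n) (b₀ (n + 1))) → Bool))
    (hφ : ∀ n, (φ n).card * 2 ^ n ≤ 2 ^ (b₀ (n + 1) - b₀ n)) :
    ∃ ψ : (n : ℕ) → Finset (↥(Finset.Ico (bs n) (bs (n + 1))) → Bool),
      (∀ᶠ n in Filter.atTop, (ψ n).card * 2 ^ n ≤ 2 ^ (bs (n + 1) - bs n)) ∧
      ∀ x : ℕ → Bool,
        (∀ᶠ n in Filter.atTop,
          (fun i : ↥(Finset.Ico (b₀ n) (b₀ (n + 1))) => x i.1) ∈ φ n) →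
        (∀ᶠ n in Filter.atTop,
          (fun i : ↥(Finset.Ico (bs n) (bs (n + 1))) => x i.1) ∈ ψ n) := by
  obtain ⟨m, hm⟩ := exists_eventually_le_and_Ico_subset hb₀ hb₁ hle hbs
  let ψ n := if h : Finset.Ico (b₀ (m n)) (b₀ (m n + 1)) ⊆ Finset.Ico (bs n) (bs (n + 1))
    then cylinder h (φ (m n)) else ∅
  refine ⟨ψ, ?_, fun x hx => ?_⟩
  · filter_upwards [hm] with n ⟨hnm, hsub⟩
    have hφn : (φ (m n)).card * 2 ^ n ≤ 2 ^ (b₀ (m n + 1) - b₀ (m n)) :=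
      (Nat.mul_le_mul_left _ (Nat.pow_le_pow_right two_pos hnm)).trans (hφ (m n))
    simpa [ψ, hsub] using card_cylinder_mul_le (β := Bool) hsub (by simpa using hφn)
  · have hm_tendsto : Tendsto m atTop atTop :=
      tendsto_atTop_mono' _ (hm.mono fun n h => h.1) tendsto_id
    filter_upwards [hm, hm_tendsto.eventually hx] with n ⟨_, hsub⟩ hxn
    simp only [ψ, dif_pos hsub, mem_cylinder]
    exact hxn

/-- Let `b₀, b₁` be strictly increasing with `b₀ 0 = 0` and `b₀ ≤* b₁`, and let `φ n` be
sets of functions `[b₀ n, b₀ (n+1)) → 2` with `|φ n| * 2^n ≤ 2^(b₀ (n+1) - b₀ n)` for all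
`n`.  With `b₁*` defined by `b₁* 0 = 0`, `b₁* (n+1) = b₁ (b₁* n + 1)`, there is a sequence
`φ*` with `φ* n ⊆ 2^[b₁* n, b₁* (n+1))` satisfying `|φ* n| * 2^n ≤ 2^(b₁* (n+1) - b₁* n)`
for all but finitely many `n`, such that `H_{b₀,φ} ⊆ H_{b₁*,φ*}`. -/
theorem stmt7 (b₀ b₁ bs : ℕ → ℕ) (hb₀ : StrictMono b₀) (hb₀0 : b₀ 0 = 0)
    (hb₁ : StrictMono b₁) (hle : ∀ᶠ n in Filter.atTop, b₀ n ≤ b₁ n)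
    (hbs0 : bs 0 = 0) (hbs : ∀ n, bs (n + 1) = b₁ (bs n + 1))
    (φ : (n : ℕ) → Finset (↥(Finset.Ico (b₀ n) (b₀ (n + 1))) → Bool))
    (hφ : ∀ n, (φ n).card * 2 ^ n ≤ 2 ^ (b₀ (n + 1) - b₀ n)) :
    ∃ ψ : (n : ℕ) → Finset (↥(Finset.Ico (bs n) (bs (n + 1))) → Bool),
      (∀ᶠ n in Filter.atTop, (ψ n).card * 2 ^ n ≤ 2 ^ (bs (n + 1) - bs n)) ∧
      ∀ x : ℕ → Bool,
        (∀ᶠ n in Filter.atTop,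
          (fun i : ↥(Finset.Ico (b₀ n) (b₀ (n + 1))) => x i.1) ∈ φ n) →
        (∀ᶠ n in Filter.atTop,
          (fun i : ↥(Finset.Ico (bs n) (bs (n + 1))) => x i.1) ∈ ψ n) :=
  stmt7_general b₀ b₁ bs hb₀ hb₁ hle hbs φ hφ
end

section
/- Let b, h ∈ ℕ^ℕ with b(i) ≥ 1 for all i and h tending to infinity. Fix s a finite sequence with s(i) ∈ [b(i)]^{≤h(i)}, and m < ω. Given any sequence ⟨(p_n, |s|) : n < ω⟩ of conditions in LOC_{b,h}(s,m) and a nonprincipal ultrafilter D on ℕ, there exist q ∈ S(b,h) with q ⊇ s, |q(i)| ≤ m for all i, and sets a_i ∈ D (for i ≥ |s|) such that p_n(i) = q(i) for all n ∈ a_i; moreover, for every (r, n*) ≤ (q, |s|) in LOC_{b,h} and every a ∈ D, there exist n₀ ∈ a and a condition extending both (r,n*) and (p_{n₀}, |s|). -/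
open Filter

/-- Key ultrafilter-limit property of the localization forcing `LOC_{b,h}`.  Conditions
in `LOC_{b,h}(s,m)` are coded as functions `p : ℕ → Finset ℕ` with `p i ⊆ {0,…,b i - 1}`,
`|p i| ≤ h i`, `|p i| ≤ m` and `p↾|s| = s`.  Given a sequence of such conditions and a
nonprincipal ultrafilter `D` on `ℕ`, there is a condition `(q, |s|) ∈ LOC_{b,h}(s,m)`
whose values are `D`-often equal to those of the `p n`; moreover every extension
`(r, n')` of `(q, |s|)` in `LOC_{b,h}` is, for every `a ∈ D`, compatible with `(p n₀,
|s|)` for some `n₀ ∈ a`. -/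
theorem stmt13 (b h : ℕ → ℕ) (hb : ∀ i, 1 ≤ b i)
    (hh : Filter.Tendsto h Filter.atTop Filter.atTop)
    (L m : ℕ) (s : ℕ → Finset ℕ)
    (hs : ∀ i < L, s i ⊆ Finset.range (b i) ∧ (s i).card ≤ h i ∧ (s i).card ≤ m)
    (p : ℕ → ℕ → Finset ℕ)
    (hp : ∀ n, (∀ i < L, p n i = s i) ∧
      ∀ i, p n i ⊆ Finset.range (b i) ∧ (p n i).card ≤ h i ∧ (p n i).card ≤ m)
    (D : Ultrafilter ℕ) (hD : ∀ a ∈ D, a.Infinite) :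
    ∃ q : ℕ → Finset ℕ,
      (∀ i < L, q i = s i) ∧
      (∀ i, q i ⊆ Finset.range (b i) ∧ (q i).card ≤ h i ∧ (q i).card ≤ m) ∧
      (∀ i, L ≤ i → ∃ a ∈ D, ∀ n ∈ a, p n i = q i) ∧
      (∀ (r : ℕ → Finset ℕ) (n' m₀ : ℕ), L ≤ n' →
        (∀ i < L, r i = q i) → (∀ i, q i ⊆ r i) →
        (∀ i, r i ⊆ Finset.range (b i) ∧ (r i).card ≤ h i ∧ (r i).card ≤ m₀) →
        ∀ a ∈ D, ∃ n₀ ∈ a, ∃ (q' : ℕ → Finset ℕ) (k m₁ : ℕ),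
          n' ≤ k ∧ L ≤ k ∧
          (∀ i < n', q' i = r i) ∧ (∀ i, r i ⊆ q' i) ∧
          (∀ i < L, q' i = p n₀ i) ∧ (∀ i, p n₀ i ⊆ q' i) ∧
          (∀ i, q' i ⊆ Finset.range (b i) ∧ (q' i).card ≤ h i ∧ (q' i).card ≤ m₁)) := by
  classical
  have key : ∀ i, ∃ t : Finset ℕ, t ∈ (Finset.range (b i)).powerset ∧ {n | p n i = t} ∈ D := by
    intro i
    have hcov : (⋃ t ∈ ((Finset.range (b i)).powerset : Finset (Finset ℕ)),
        {n | p n i = t}) ∈ D := by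
      have he : (⋃ t ∈ ((Finset.range (b i)).powerset : Finset (Finset ℕ)),
          {n | p n i = t}) = Set.univ := by
        ext n
        simp only [Set.mem_iUnion, Set.mem_univ, iff_true, Set.mem_setOf_eq]
        exact ⟨p n i, Finset.mem_powerset.2 ((hp n).2 i).1, rfl⟩
      rw [he]; exact Filter.univ_mem
    exact (Ultrafilter.finite_biUnion_mem_iff
      ((Finset.range (b i)).powerset.finite_toSet)).1 hcov
  choose q _hq1 hq2 using key
  have hwit : ∀ i, ∃ n, p n i = q i := by
    intro i
    obtain ⟨n, hn⟩ := (hD _ (hq2 i)).nonempty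
    exact ⟨n, hn⟩
  have hqs : ∀ i < L, q i = s i := by
    intro i hi
    obtain ⟨n, hn⟩ := hwit i
    rw [← hn, (hp n).1 i hi]
  have hqb : ∀ i, q i ⊆ Finset.range (b i) ∧ (q i).card ≤ h i ∧ (q i).card ≤ m := by
    intro i
    obtain ⟨n, hn⟩ := hwit i
    rw [← hn]; exact (hp n).2 i
  refine ⟨q, hqs, hqb, fun i _ => ⟨_, hq2 i, fun n hn => hn⟩, ?_⟩
  intro r n' m₀ hn'L hrq hqr hr a ha
  obtain ⟨N, hN⟩ := Filter.eventually_atTop.1 (Filter.tendsto_atTop.mp hh (m₀ + m))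
  set k := max N (max n' L) with hk
  have hkn' : n' ≤ k := le_trans (le_max_left _ _) (le_max_right _ _)
  have hkL : L ≤ k := by omega
  have hkN : N ≤ k := le_max_left _ _
  have hA : (a ∩ ⋂ i ∈ Finset.Ico L k, {n | p n i = q i}) ∈ D := by
    refine Filter.inter_mem ha ?_
    exact (Filter.biInter_finset_mem _).2 fun i _ => hq2 i
  obtain ⟨n₀, hn₀a, hn₀b⟩ := (hD _ hA).nonempty
  have hmid : ∀ i, L ≤ i → i < k → p n₀ i = q i := by
    intro i h1 h2
    have := Set.mem_iInter₂.1 hn₀b i (Finset.mem_Ico.2 ⟨h1, h2⟩)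
    exact this
  refine ⟨n₀, hn₀a, fun i => r i ∪ p n₀ i, k, m₀ + m, hkn', hkL, ?_, ?_, ?_, ?_, ?_⟩
  · -- q' i = r i for i < n'
    intro i hi
    have hik : i < k := lt_of_lt_of_le hi hkn'
    rcases lt_or_ge i L with hL | hL
    · have : p n₀ i ⊆ r i := by
        rw [(hp n₀).1 i hL, ← hqs i hL, ← hrq i hL]
      exact Finset.union_eq_left.2 this
    · have : p n₀ i ⊆ r i := by rw [hmid i hL hik]; exact hqr i
      exact Finset.union_eq_left.2 this
  · exact fun i => Finset.subset_union_left
  · intro i hi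
    have h1 : p n₀ i = r i := by rw [(hp n₀).1 i hi, ← hqs i hi, ← hrq i hi]
    show r i ∪ p n₀ i = p n₀ i
    rw [h1, Finset.union_self]
  · exact fun i => Finset.subset_union_right
  · intro i
    refine ⟨Finset.union_subset (hr i).1 ((hp n₀).2 i).1, ?_, ?_⟩
    · rcases lt_or_ge i k with hik | hik
      · have heq : r i ∪ p n₀ i = r i := by
          rcases lt_or_ge i L with hL | hL
          · exact Finset.union_eq_left.2 (by rw [(hp n₀).1 i hL, ← hqs i hL, ← hrq i hL])
          · exact Finset.union_eq_left.2 (by rw [hmid i hL hik]; exact hqr i)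
        show (r i ∪ p n₀ i).card ≤ h i
        rw [heq]; exact (hr i).2.1
      · calc (r i ∪ p n₀ i).card ≤ (r i).card + (p n₀ i).card := Finset.card_union_le _ _
          _ ≤ m₀ + m := Nat.add_le_add (hr i).2.2 ((hp n₀).2 i).2.2
          _ ≤ h i := hN i (le_trans hkN hik)
    · calc (r i ∪ p n₀ i).card ≤ (r i).card + (p n₀ i).card := Finset.card_union_le _ _
        _ ≤ m₀ + m := Nat.add_le_add (hr i).2.2 ((hp n₀).2 i).2.2
end

section
/- If a forcing poset P is ccc, then a subset Q ⊆ P is ultrafilter-linked (D-linked for every nonprincipal ultrafilter D on ℕ) if and only if Q is Fr-linked (linked with respect to the Fréchet filter). -/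
/-!
The Fréchet filter lies above the hyperfilter, so uf-linked implies Fr-linked. Conversely, if no
condition forces `Ẇ(p̄)` to be `D`-positive, the conditions `r` incompatible with `p n` for all `n`
in some `a_r ∈ D` are dense. By ccc a maximal antichain `A` inside them is countable, so there is
a sequence `k` eventually in every `a_x`, `x ∈ A`. Fr-linkedness of `p ∘ k` yields `q`; a common
extension `c` of `q` and some `x ∈ A` is compatible with `p (k n)` for infinitely many `n`, while
`x` is compatible with none of them for large `n`.
-/

open Filter Set

theorem Filter.exists_seq_forall_eventually_mem {α ι : Type*} [Countable ι] {F : Filter α}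
    [F.NeBot] (s : ι → Set α) (hs : ∀ i, s i ∈ F) :
    ∃ k : ℕ → α, ∀ i, ∀ᶠ n in atTop, k n ∈ s i := by
  have hFG : F ≤ ⨅ i, 𝓟 (s i) := le_iInf fun i => le_principal_iff.2 (hs i)
  have := NeBot.mono ‹F.NeBot› hFG
  obtain ⟨k, hk⟩ := (⨅ i, 𝓟 (s i)).exists_seq_tendsto
  exact ⟨k, fun i => hk (mem_iInf_of_mem i (mem_principal_self _))⟩

namespace Forcing

variable {P : Type*} [Preorder P]

def Compatible (p q : P) : Prop := ∃ c, c ≤ p ∧ c ≤ q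

theorem Compatible.refl (p : P) : Compatible p p := ⟨p, le_rfl, le_rfl⟩

theorem Compatible.symm {p q : P} (h : Compatible p q) : Compatible q p :=
  let ⟨c, hp, hq⟩ := h
  ⟨c, hq, hp⟩

theorem Compatible.mono_left {p p' q : P} (h : Compatible p q) (hp : p ≤ p') :
    Compatible p' q :=
  let ⟨c, hcp, hcq⟩ := h
  ⟨c, hcp.trans hp, hcq⟩

variable (P) in
def CCC : Prop := ∀ A : Set P, A.Pairwise (fun p q => ¬ Compatible p q) → A.Countable

theorem exists_antichain_subset_forall_compatible (R : Set P) :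
    ∃ A ⊆ R, A.Pairwise (fun x y => ¬ Compatible x y) ∧ ∀ r ∈ R, ∃ x ∈ A, Compatible r x := by
  obtain ⟨A, ⟨hAR, hA⟩, hmax⟩ :=
    zorn_subset {A | A ⊆ R ∧ A.Pairwise (fun x y => ¬ Compatible x y)} fun c hc hchain =>
      ⟨⋃₀ c, ⟨sUnion_subset fun s hs => (hc hs).1, hchain.pairwise_sUnion.2 fun s hs => (hc hs).2⟩,
        fun _ => subset_sUnion_of_mem⟩
  refine ⟨A, hAR, hA, fun r hr => ?_⟩
  by_contra! h
  have hinsert : insert r A ⊆ A :=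
    hmax ⟨insert_subset hr hAR, hA.insert fun x hx _ => ⟨h x hx, fun hc => h x hx hc.symm⟩⟩
      (subset_insert r A)
  exact h r (hinsert (mem_insert r A)) (Compatible.refl r)

theorem CCC.exists_countable_subset_forall_compatible (hP : CCC P) {R : Set P}
    (hR : ∀ q, ∃ r ∈ R, r ≤ q) : ∃ A ⊆ R, A.Countable ∧ ∀ q, ∃ x ∈ A, Compatible q x := by
  obtain ⟨A, hAR, hA, hmax⟩ := exists_antichain_subset_forall_compatible R
  refine ⟨A, hAR, hP A hA, fun q => ?_⟩
  obtain ⟨r, hrR, hrq⟩ := hR q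
  obtain ⟨x, hxA, hrx⟩ := hmax r hrR
  exact ⟨x, hxA, hrx.mono_left hrq⟩

variable {α : Type*}

/-- `q` forces `Ẇ(p̄)` to be `F`-positive iff every `r ≤ q` is compatible with `p n` for
`F`-frequently many `n`. -/
def Linked (F : Filter α) (Q : Set P) : Prop :=
  ∀ p : α → P, (∀ n, p n ∈ Q) → ∃ q, ∀ r ≤ q, ∃ᶠ n in F, Compatible r (p n)

theorem linked_iff {F : Filter α} {Q : Set P} :
    Linked F Q ↔ ∀ p : α → P, (∀ n, p n ∈ Q) →
      ∃ q, ∀ r ≤ q, ∀ a ∈ F, ∃ n ∈ a, Compatible r (p n) := by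
  simp only [Linked, frequently_iff]

theorem linked_atTop_iff {Q : Set P} :
    Linked (atTop : Filter ℕ) Q ↔ ∀ p : ℕ → P, (∀ n, p n ∈ Q) →
      ∃ q, ∀ r ≤ q, ∀ n, ∃ k, n ≤ k ∧ Compatible r (p k) := by
  simp only [Linked, frequently_atTop]

theorem Linked.mono {F G : Filter α} {Q : Set P} (hQ : Linked F Q) (hFG : F ≤ G) :
    Linked G Q := fun p hp =>
  let ⟨q, hq⟩ := hQ p hp
  ⟨q, fun r hr => (hq r hr).filter_mono hFG⟩

theorem Linked.of_atTop (hP : CCC P) {Q : Set P} (hQ : Linked (atTop : Filter ℕ) Q)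
    (F : Filter α) [F.NeBot] : Linked F Q := by
  intro p hp
  by_contra! hbad
  obtain ⟨A, hAR, hAc, hA⟩ := hP.exists_countable_subset_forall_compatible
    (R := {r | ∀ᶠ n in F, ¬ Compatible r (p n)}) fun q =>
      let ⟨r, hrq, hr⟩ := hbad q
      ⟨r, hr, hrq⟩
  have := hAc.to_subtype
  obtain ⟨k, hk⟩ := Filter.exists_seq_forall_eventually_mem
    (fun x : A => {n | ¬ Compatible (x : P) (p n)}) fun x => hAR x.2
  obtain ⟨q, hq⟩ := hQ (p ∘ k) fun n => hp (k n)
  obtain ⟨x, hxA, c, hcq, hcx⟩ := hA q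
  obtain ⟨n, hcn, hxn⟩ := ((hq c hcq).and_eventually (hk ⟨x, hxA⟩)).exists
  exact hxn (hcn.mono_left hcx)

end Forcing

open Forcing in
/-- For a ccc forcing poset `P` and `Q ⊆ P`: `Q` is ultrafilter-linked iff `Q` is
Fr-linked.  Both notions are unfolded semantically: `q` forces `Ẇ(p̄) = {n : p n ∈ Ġ}` to
be `F`-positive iff every `r ≤ q` and every `a ∈ F⁺`-witness admits a compatible `p k`.
For the Fréchet filter, positivity means infinity: `∀ r ≤ q, ∀ n, ∃ k ≥ n` with `r`
compatible with `p k`.  For an ultrafilter `D`, positivity means meeting every member of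
`D`: `∀ r ≤ q, ∀ a ∈ D, ∃ k ∈ a` with `r` compatible with `p k`. -/
theorem stmt14 {P : Type*} [Preorder P]
    (hccc : ∀ A : Set P,
      (∀ p ∈ A, ∀ q ∈ A, p ≠ q → ¬ ∃ r : P, r ≤ p ∧ r ≤ q) → A.Countable)
    (Q : Set P) :
    (∀ p : ℕ → P, (∀ n, p n ∈ Q) →
      ∃ q : P, ∀ r ≤ q, ∀ n : ℕ, ∃ k, n ≤ k ∧ ∃ c : P, c ≤ r ∧ c ≤ p k) ↔
    (∀ D : Ultrafilter ℕ, (∀ a ∈ D, a.Infinite) →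
      ∀ p : ℕ → P, (∀ n, p n ∈ Q) →
        ∃ q : P, ∀ r ≤ q, ∀ a ∈ D, ∃ k ∈ a, ∃ c : P, c ≤ r ∧ c ≤ p k) := by
  have hP : CCC P := hccc
  constructor
  · intro hFr D _
    exact linked_iff.1 ((linked_atTop_iff.2 hFr).of_atTop hP (D : Filter ℕ))
  · intro huf
    have hinf : ∀ a ∈ hyperfilter ℕ, a.Infinite := fun _ ha hfin =>
      notMem_hyperfilter_of_finite hfin ha
    exact linked_atTop_iff.1 ((linked_iff.2 (huf _ hinf)).mono Nat.hyperfilter_le_atTop)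
end
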